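/- For every finite digraph D with root r and every capacity vector c ∈ ℝ₊^E there exists f ≤ c such that λ_c(v) = λ_f(v) = ϱ_f(v) for every v ∈ V−r; moreover if c is integral then f can be chosen integral. -/
import Mathlib


attribute [local instance] Classical.propDecidable
set_option linter.unusedSectionVars false
set_option linter.unusedVariables false
set_option maxHeartbeats 1000000

/-- A finite digraph: edges `E` with tail and head maps (parallel edges allowed). -/
structure Digraph' (V E : Type) where
  tail : E → V
  head : E → V

namespace Digraph'

variable {V E : Type} [Fintype V] [Fintype E]

/-- `es` is a directed walk from `r` to `v`. -/
def IsWalk (D : Digraph' V E) : V → V → List E → Prop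
  | r, v, [] => r = v
  | r, v, e :: es => D.tail e = r ∧ D.IsWalk (D.head e) v es

/-- `es` is a directed path from `r` to `v` using only edges of `F`. -/
def IsPathIn (D : Digraph' V E) (F : Set E) (r v : V) (es : List E) : Prop :=
  D.IsWalk r v es ∧ (∀ e ∈ es, e ∈ F) ∧ (r :: es.map D.head).Nodup

/-- The members of a list of paths are pairwise edge-disjoint. -/
def EdgeDisjoint (P : List (List E)) : Prop :=
  P.Pairwise (fun p q => ∀ e, e ∈ p → e ∉ q)

/-- The maximum number of pairwise edge-disjoint `r → v` paths inside `F`. -/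
noncomputable def lam (D : Digraph' V E) (F : Set E) (r v : V) : ℕ :=
  sSup {k | ∃ P : List (List E), P.length = k ∧ (∀ p ∈ P, D.IsPathIn F r v p) ∧
    EdgeDisjoint P}

/-- The set of edges of `F` whose head is `v`. -/
def inEdges (D : Digraph' V E) (F : Set E) (v : V) : Set E := {e ∈ F | D.head e = v}

/-- The in-degree of `v` in the subgraph `F`. -/
noncomputable def indeg (D : Digraph' V E) (F : Set E) (v : V) : ℕ :=
  (D.inEdges F v).ncard

/-- `I` arises as the set of last edges of a system of pairwise edge-disjoint
`r → v` paths in `F` (membership in the gammoid `G_F(v)`). -/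
def InGammoid (D : Digraph' V E) (F : Set E) (r v : V) (I : Set E) : Prop :=
  ∃ P : List (List E), (∀ p ∈ P, D.IsPathIn F r v p) ∧ EdgeDisjoint P ∧
    I = {e | ∃ p ∈ P, p.getLast? = some e}

/-- `F` is an `r`-flame: the in-degree of each `v ≠ r` equals λ_F(r,v). -/
def IsFlame (D : Digraph' V E) (r : V) (F : Set E) : Prop :=
  ∀ v, v ≠ r → D.indeg F v = D.lam F r v

/-- Total of `x` on the in-edges of `v`. -/
noncomputable def inflow (D : Digraph' V E) (x : E → ℝ) (v : V) : ℝ :=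
  ∑ e, if D.head e = v then x e else 0

/-- Total of `x` on the out-edges of `v`. -/
noncomputable def outflow (D : Digraph' V E) (x : E → ℝ) (v : V) : ℝ :=
  ∑ e, if D.tail e = v then x e else 0

/-- Total of `x` on the edges entering the vertex set `W`. -/
noncomputable def rhoSet (D : Digraph' V E) (x : E → ℝ) (W : Set V) : ℝ :=
  ∑ e, if D.head e ∈ W ∧ D.tail e ∉ W then x e else 0

/-- `x` is a (nonnegative) `r → v` flow. -/
def IsFlow (D : Digraph' V E) (r v : V) (x : E → ℝ) : Prop :=
  (∀ e, 0 ≤ x e) ∧ (∀ u, u ≠ r → u ≠ v → D.inflow x u = D.outflow x u) ∧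
    D.inflow x r = 0 ∧ D.outflow x v = 0

/-- The flow-connectivity from `r` to `v` under capacity `c`. -/
noncomputable def lamF (D : Digraph' V E) (r v : V) (c : E → ℝ) : ℝ :=
  sSup {a | ∃ x, D.IsFlow r v x ∧ x ≤ c ∧ D.outflow x r = a}

/-- Characteristic vector of an edge. -/
noncomputable def chi (e : E) : E → ℝ := fun e' => if e' = e then 1 else 0

/-- Restriction of `x` to the in-edges of `v` (zero elsewhere). -/
noncomputable def restrictIn (D : Digraph' V E) (v : V) (x : E → ℝ) : E → ℝ :=
  fun e => if D.head e = v then x e else 0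

/-- The polygammoid `G_c(v)`: restrictions to the in-edges of `v`
of `r → v` flows bounded by `c`. -/
def polygammoid (D : Digraph' V E) (r v : V) (c : E → ℝ) : Set (E → ℝ) :=
  {s | ∃ x, D.IsFlow r v x ∧ x ≤ c ∧ D.restrictIn v x = s}

/-- `D` has no parallel edges. -/
def NoParallel (D : Digraph' V E) : Prop :=
  ∀ e e', D.tail e = D.tail e' → D.head e = D.head e' → e = e'

/-- `es` is a directed cycle. -/
def IsCycle (D : Digraph' V E) (es : List E) : Prop :=
  es ≠ [] ∧ ∃ u, D.IsWalk u u es ∧ (es.map D.head).Nodup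

/-- Characteristic vector of a list of edges. -/
noncomputable def charVec (es : List E) : E → ℝ :=
  fun e => ((es.filter (fun e' => e' = e)).length : ℝ)

section Aux

variable (D : Digraph' V E) (r : V)

lemma sum_outflow (x : E → ℝ) (A : Finset V) :
    ∑ u ∈ A, D.outflow x u = ∑ e, if D.tail e ∈ A then x e else 0 := by
  unfold outflow
  rw [Finset.sum_comm]
  refine Finset.sum_congr rfl fun e _ => ?_
  by_cases h : D.tail e ∈ A
  · rw [Finset.sum_eq_single (D.tail e)] <;> simp_all
    intro b _ h1 h2; exact absurd h2.symm h1
  · rw [Finset.sum_eq_zero] <;> intros <;> simp_all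
    intro h'; exact absurd (h' ▸ ‹_›) h

lemma sum_inflow (x : E → ℝ) (A : Finset V) :
    ∑ u ∈ A, D.inflow x u = ∑ e, if D.head e ∈ A then x e else 0 := by
  unfold inflow
  rw [Finset.sum_comm]
  refine Finset.sum_congr rfl fun e _ => ?_
  by_cases h : D.head e ∈ A
  · rw [Finset.sum_eq_single (D.head e)] <;> simp_all
    intro b _ h1 h2; exact absurd h2.symm h1
  · rw [Finset.sum_eq_zero] <;> intros <;> simp_all
    intro h'; exact absurd (h' ▸ ‹_›) h

/-- Key identity: value of a flow equals flow into W minus flow out of W. -/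
lemma flow_value_eq (v : V) (x : E → ℝ) (hx : D.IsFlow r v x) (W : Set V)
    (hv : v ∈ W) (hrW : r ∉ W) :
    D.outflow x r = D.rhoSet x W - D.rhoSet x Wᶜ := by
  classical
  set A : Finset V := Finset.univ.filter (fun u => u ∉ W) with hA
  have h1 : ∑ u ∈ A, (D.outflow x u - D.inflow x u) = D.outflow x r := by
    rw [Finset.sum_eq_single r]
    · rw [hx.2.2.1]; ring
    · intro u hu hne
      have huW : u ∉ W := by simp [hA] at hu; exact hu
      have : u ≠ v := fun h => huW (h ▸ hv)
      rw [hx.2.1 u hne this]; ring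
    · intro h
      exact absurd (by simp [hA, hrW]) h
  rw [Finset.sum_sub_distrib, sum_outflow, sum_inflow] at h1
  rw [← h1, rhoSet, rhoSet, ← Finset.sum_sub_distrib, ← Finset.sum_sub_distrib]
  refine Finset.sum_congr rfl fun e _ => ?_
  by_cases ht : D.tail e ∈ W <;> by_cases hh : D.head e ∈ W <;>
    simp [hA, ht, hh]


lemma rho_nonneg (f : E → ℝ) (hf : ∀ e, 0 ≤ f e) (W : Set V) : 0 ≤ D.rhoSet f W :=
  Finset.sum_nonneg fun e _ => by split <;> first | exact hf e | exact le_rfl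

lemma rho_mono (x f : E → ℝ) (hx : ∀ e, 0 ≤ x e) (hxf : x ≤ f) (W : Set V) :
    D.rhoSet x W ≤ D.rhoSet f W :=
  Finset.sum_le_sum fun e _ => by split <;> first | exact hxf e | exact le_rfl

/-- Weak duality. -/
lemma flow_le_cut (v : V) (x f : E → ℝ) (hx : D.IsFlow r v x) (hxf : x ≤ f)
    (W : Set V) (hv : v ∈ W) (hrW : r ∉ W) :
    D.outflow x r ≤ D.rhoSet f W := by
  rw [D.flow_value_eq r v x hx W hv hrW]
  have h1 := D.rho_nonneg x hx.1 Wᶜ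
  have h2 := D.rho_mono x f hx.1 hxf W
  linarith

/-- The family of `r`–avoiding cuts containing `v`. -/
noncomputable def cutSet' (r v : V) : Finset (Finset V) :=
  Finset.univ.filter (fun X => v ∈ X ∧ r ∉ X)

lemma mem_cutSet' {r v : V} {X : Finset V} :
    X ∈ cutSet' r v ↔ v ∈ X ∧ r ∉ X := by simp [cutSet']

lemma cutSet_nonempty {v : V} (hv : v ≠ r) : (cutSet' r v : Finset (Finset V)).Nonempty :=
  ⟨{v}, by simp [cutSet', Ne.symm hv]⟩

noncomputable def cutVals (f : E → ℝ) (v : V) : Finset ℝ :=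
  (cutSet' r v).image (fun X : Finset V => D.rhoSet f (↑X : Set V))

lemma cutVals_nonempty {v : V} (hv : v ≠ r) (f : E → ℝ) :
    (D.cutVals r f v).Nonempty := by
  obtain ⟨X, hX⟩ := cutSet_nonempty (r := r) hv
  exact ⟨D.rhoSet f ↑X, Finset.mem_image_of_mem _ hX⟩

/-- Min cut value. -/
noncomputable def cutMin (f : E → ℝ) (v : V) : ℝ := sInf ↑(D.cutVals r f v)

lemma cutMin_le (f : E → ℝ) {v : V} (X : Finset V) (hv : v ∈ X) (hrX : r ∉ X) :
    D.cutMin r f v ≤ D.rhoSet f ↑X := by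
  apply csInf_le (Set.Finite.bddBelow (Finset.finite_toSet _))
  exact Finset.mem_coe.mpr
    (Finset.mem_image_of_mem _ (mem_cutSet'.mpr ⟨hv, hrX⟩))

lemma exists_mincut (f : E → ℝ) {v : V} (hv : v ≠ r) :
    ∃ X : Finset V, v ∈ X ∧ r ∉ X ∧ D.rhoSet f ↑X = D.cutMin r f v := by
  have h : D.cutMin r f v ∈ (D.cutVals r f v : Set ℝ) :=
    Set.Nonempty.csInf_mem (by exact_mod_cast D.cutVals_nonempty r hv f)
      (Finset.finite_toSet _)
  obtain ⟨X, hX, h3⟩ := Finset.mem_image.mp (Finset.mem_coe.mp h)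
  obtain ⟨h1, h2⟩ := mem_cutSet'.mp hX
  exact ⟨X, h1, h2, h3⟩

lemma le_cutMin (f : E → ℝ) {v : V} (hv : v ≠ r) (a : ℝ)
    (h : ∀ X : Finset V, v ∈ X → r ∉ X → a ≤ D.rhoSet f ↑X) :
    a ≤ D.cutMin r f v := by
  apply le_csInf
  · exact_mod_cast D.cutVals_nonempty r hv f
  · rintro b hb
    obtain ⟨X, hX, rfl⟩ := Finset.mem_image.mp (Finset.mem_coe.mp hb)
    obtain ⟨h1, h2⟩ := mem_cutSet'.mp hX
    exact h X h1 h2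


lemma continuous_outflow (u : V) : Continuous (fun x : E → ℝ => D.outflow x u) := by
  unfold outflow
  exact continuous_finset_sum _ fun e _ => by
    by_cases h : D.tail e = u <;> simp [h] <;> fun_prop

lemma continuous_inflow (u : V) : Continuous (fun x : E → ℝ => D.inflow x u) := by
  unfold inflow
  exact continuous_finset_sum _ fun e _ => by
    by_cases h : D.head e = u <;> simp [h] <;> fun_prop

lemma continuous_rho (W : Set V) : Continuous (fun x : E → ℝ => D.rhoSet x W) := by
  unfold rhoSet
  exact continuous_finset_sum _ fun e _ => by
    by_cases h : D.head e ∈ W ∧ D.tail e ∉ W <;> simp [h] <;> fun_prop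

lemma isFlow_zero (v : V) : D.IsFlow r v (fun _ => 0) := by
  refine ⟨fun e => le_rfl, fun u _ _ => ?_, ?_, ?_⟩ <;>
    simp [inflow, outflow]

lemma flowSet_compact (v : V) (f : E → ℝ) (hf : ∀ e, 0 ≤ f e) :
    IsCompact {x : E → ℝ | D.IsFlow r v x ∧ x ≤ f} := by
  apply IsCompact.of_isClosed_subset (isCompact_Icc (a := (fun _ => 0 : E → ℝ)) (b := f))
  · have h1 : IsClosed {x : E → ℝ | ∀ e, 0 ≤ x e} := by
      have : {x : E → ℝ | ∀ e, 0 ≤ x e} = Set.Ici (fun _ => 0) := by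
        ext x; simp [Set.mem_Ici, Pi.le_def]
      rw [this]; exact isClosed_Ici
    have h2 : IsClosed {x : E → ℝ | ∀ u, u ≠ r → u ≠ v → D.inflow x u = D.outflow x u} := by
      have : {x : E → ℝ | ∀ u, u ≠ r → u ≠ v → D.inflow x u = D.outflow x u} =
          ⋂ u ∈ {u : V | u ≠ r ∧ u ≠ v},
            {x : E → ℝ | D.inflow x u = D.outflow x u} := by
        ext x; simp only [Set.mem_iInter, Set.mem_setOf_eq]
        constructor
        · rintro h u ⟨h1, h2⟩; exact h u h1 h2
        · intro h u h1 h2; exact h u ⟨h1, h2⟩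
      rw [this]
      exact isClosed_biInter fun u _ =>
        isClosed_eq (D.continuous_inflow u) (D.continuous_outflow u)
    have h3 : IsClosed {x : E → ℝ | D.inflow x r = 0} :=
      isClosed_eq (D.continuous_inflow r) continuous_const
    have h4 : IsClosed {x : E → ℝ | D.outflow x v = 0} :=
      isClosed_eq (D.continuous_outflow v) continuous_const
    have h5 : IsClosed {x : E → ℝ | x ≤ f} := isClosed_Iic (a := f)
    have : {x : E → ℝ | D.IsFlow r v x ∧ x ≤ f} =
        {x | ∀ e, 0 ≤ x e} ∩ ({x | ∀ u, u ≠ r → u ≠ v →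
          D.inflow x u = D.outflow x u} ∩ ({x | D.inflow x r = 0} ∩
          ({x | D.outflow x v = 0} ∩ {x | x ≤ f}))) := by
      ext x
      simp only [Set.mem_setOf_eq, Set.mem_inter_iff, IsFlow]
      tauto
    rw [this]
    exact h1.inter (h2.inter (h3.inter (h4.inter h5)))
  · rintro x ⟨hx, hxf⟩
    exact ⟨fun e => hx.1 e, hxf⟩

lemma exists_maxflow (v : V) (f : E → ℝ) (hf : ∀ e, 0 ≤ f e) :
    ∃ x, D.IsFlow r v x ∧ x ≤ f ∧ D.lamF r v f = D.outflow x r ∧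
      ∀ y, D.IsFlow r v y → y ≤ f → D.outflow y r ≤ D.outflow x r := by
  have hne : {x : E → ℝ | D.IsFlow r v x ∧ x ≤ f}.Nonempty :=
    ⟨fun _ => 0, D.isFlow_zero r v, fun e => hf e⟩
  obtain ⟨x, hxS, hmax'⟩ := (D.flowSet_compact r v f hf).exists_isMaxOn hne
    ((D.continuous_outflow r).continuousOn)
  have hmax : ∀ y ∈ {x : E → ℝ | D.IsFlow r v x ∧ x ≤ f},
      D.outflow y r ≤ D.outflow x r := fun y hy => hmax' hy
  refine ⟨x, hxS.1, hxS.2, ?_, fun y hy hyf => hmax y ⟨hy, hyf⟩⟩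
  unfold lamF
  apply le_antisymm
  · apply csSup_le
    · exact ⟨0, fun _ => 0, D.isFlow_zero r v, fun e => hf e, by simp [outflow]⟩
    · rintro a ⟨y, hy, hyf, rfl⟩
      exact hmax y ⟨hy, hyf⟩
  · apply le_csSup
    · exact ⟨D.outflow x r, by rintro a ⟨y, hy, hyf, rfl⟩; exact hmax y ⟨hy, hyf⟩⟩
    · exact ⟨x, hxS.1, hxS.2, rfl⟩


lemma inflow_diff (y z : E → ℝ) (e : E) (h : ∀ e', e' ≠ e → z e' = y e') (t : V) :
    D.inflow z t = D.inflow y t + (if D.head e = t then z e - y e else 0) := by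
  have key : ∑ e', ((if D.head e' = t then z e' else 0) -
      (if D.head e' = t then y e' else 0)) =
      (if D.head e = t then z e - y e else 0) := by
    rw [Finset.sum_eq_single e]
    · split <;> simp
    · intro e' _ hne
      rw [h e' hne]; ring
    · simp
  unfold inflow
  rw [Finset.sum_sub_distrib] at key
  linarith [key]

lemma outflow_diff (y z : E → ℝ) (e : E) (h : ∀ e', e' ≠ e → z e' = y e') (t : V) :
    D.outflow z t = D.outflow y t + (if D.tail e = t then z e - y e else 0) := by
  have key : ∑ e', ((if D.tail e' = t then z e' else 0) -
      (if D.tail e' = t then y e' else 0)) =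
      (if D.tail e = t then z e - y e else 0) := by
    rw [Finset.sum_eq_single e]
    · split <;> simp
    · intro e' _ hne
      rw [h e' hne]; ring
    · simp
  unfold outflow
  rw [Finset.sum_sub_distrib] at key
  linarith [key]

lemma outflow_zero_edge (x : E → ℝ) (v : V) (hx : ∀ e, 0 ≤ x e)
    (h : D.outflow x v = 0) : ∀ e, D.tail e = v → x e = 0 := by
  intro e he
  have h0 : ∀ e' ∈ Finset.univ, (0:ℝ) ≤ if D.tail e' = v then x e' else 0 :=
    fun e' _ => by split <;> first | exact hx e' | exact le_rfl
  have := (Finset.sum_eq_zero_iff_of_nonneg h0).mp h e (Finset.mem_univ e)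
  simpa [he] using this

/-- Residual step relation. -/
def rstep (f x : E → ℝ) (v : V) (u w : V) : Prop :=
  u ≠ v ∧ ∃ e, (D.tail e = u ∧ D.head e = w ∧ x e < f e) ∨
    (D.head e = u ∧ D.tail e = w ∧ 0 < x e)


lemma augment (hr : ∀ e, D.head e ≠ r) (v : V) (f x : E → ℝ)
    (hx : D.IsFlow r v x) (hxf : x ≤ f) (u : V)
    (hu : Relation.ReflTransGen (D.rstep f x v) r u) :
    ∃ ε : ℝ, 0 < ε ∧ ∃ K : ℝ, 0 ≤ K ∧ ∀ δ : ℝ, 0 < δ → δ ≤ ε → ∃ y : E → ℝ,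
      (∀ e, 0 ≤ y e) ∧ (∀ e, y e ≤ f e) ∧ (∀ e, D.tail e = v → y e = x e) ∧
      (∀ t, t ≠ r → t ≠ u →
        D.inflow y t - D.outflow y t = D.inflow x t - D.outflow x t) ∧
      (D.outflow y r = D.outflow x r + if u = r then 0 else δ) ∧
      (u ≠ r → D.inflow y u - D.outflow y u
        = D.inflow x u - D.outflow x u + δ) ∧
      (∀ e, |y e - x e| ≤ K * δ) := by
  induction hu with
  | refl =>
    refine ⟨1, one_pos, 0, le_rfl, fun δ h1 h2 => ⟨x, hx.1, hxf, fun _ _ => rfl,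
      fun t _ _ => rfl, by simp, fun h => absurd rfl h, fun e => by simp⟩⟩
  | @tail b w hrb hstep ih =>
    obtain ⟨ε, hε, K, hK, hP⟩ := ih
    obtain ⟨hbv, e, hcase⟩ := hstep
    have hK1 : (0:ℝ) < K + 1 := by linarith
    rcases hcase with ⟨hte, hhe, hlt⟩ | ⟨hhe, hte, hpos⟩
    · -- forward edge e : b → w, x e < f e
      set ρ := f e - x e with hρ
      have hρpos : 0 < ρ := by simp [hρ]; linarith
      refine ⟨min ε (ρ / (2 * (K + 1))), lt_min hε (by positivity), K + 1,
        by linarith, fun δ hδ hδε => ?_⟩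
      obtain ⟨y, hy0, hyf, hyv, hcons, hvalr, hexc, hbd⟩ :=
        hP δ hδ (le_trans hδε (min_le_left _ _))
      have hδρ : (K + 1) * δ ≤ ρ / 2 := by
        have h1 : δ ≤ ρ / (2 * (K + 1)) := le_trans hδε (min_le_right _ _)
        calc (K + 1) * δ ≤ (K + 1) * (ρ / (2 * (K + 1))) := by
              exact mul_le_mul_of_nonneg_left h1 (le_of_lt hK1)
          _ = ρ / 2 := by field_simp
      set y' := Function.update y e (y e + δ) with hy'
      have hup : ∀ e', e' ≠ e → y' e' = y e' := fun e' h =>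
        Function.update_of_ne h _ _
      have hupe : y' e = y e + δ := Function.update_self _ _ _
      have hbde : |y e - x e| ≤ K * δ := hbd e
      have hin : ∀ t, D.inflow y' t = D.inflow y t +
          (if D.head e = t then δ else 0) := by
        intro t
        rw [D.inflow_diff y y' e hup t, hupe]
        congr 1; split <;> ring
      have hout : ∀ t, D.outflow y' t = D.outflow y t +
          (if D.tail e = t then δ else 0) := by
        intro t
        rw [D.outflow_diff y y' e hup t, hupe]
        congr 1; split <;> ring
      have hwr : w ≠ r := fun h => hr e (hhe.trans h)
      refine ⟨y', ?_, ?_, ?_, ?_, ?_, ?_, ?_⟩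
      · intro e'
        by_cases h : e' = e
        · subst h; rw [hupe]; have := hy0 e'; linarith
        · rw [hup e' h]; exact hy0 e'
      · intro e'
        by_cases h : e' = e
        · subst h; rw [hupe]
          have h1 : |y e' - x e'| ≤ K * δ := hbd e'
          have := abs_le.mp h1
          linarith [this.2]
        · rw [hup e' h]; exact hyf e'
      · intro e' hv'
        by_cases h : e' = e
        · exact absurd (h ▸ hv' : D.tail e = v) (hte ▸ hbv : D.tail e ≠ v)
        · rw [hup e' h]; exact hyv e' hv'
      · intro t htr htw
        rw [hin t, hout t]
        have hh : D.head e ≠ t := fun h => htw (hhe ▸ h.symm ▸ rfl)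
        by_cases hbt : D.tail e = t
        · have hbt' : b = t := hte ▸ hbt
          have h2 := hexc (hbt' ▸ htr)
          simp only [if_neg hh, if_pos hbt]
          rw [← hbt'] at *
          linarith [h2]
        · simp only [if_neg hh, if_neg hbt]
          have hbt' : t ≠ b := fun h => hbt (h ▸ hte)
          have := hcons t htr hbt'
          linarith [this]
      · rw [hout r, if_neg hwr]
        by_cases hbr : b = r
        · rw [if_pos (hte.trans hbr)]
          rw [hvalr, if_pos hbr]; ring
        · rw [if_neg (fun h => hbr (hte.symm.trans h))]
          rw [hvalr, if_neg hbr]; ring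
      · intro hwr'
        rw [hin w, hout w, if_pos hhe]
        by_cases hbw : b = w
        · rw [if_pos (hte.trans hbw)]
          have := hexc (hbw ▸ hwr')
          rw [← hbw] at *
          linarith [this]
        · rw [if_neg (fun h => hbw (hte.symm.trans h))]
          have := hcons w hwr' (fun h => hbw h.symm)
          linarith [this]
      · intro e'
        by_cases h : e' = e
        · subst h
          rw [hupe]
          have := abs_le.mp (hbd e')
          rw [abs_le]
          constructor <;> [linarith [this.1]; linarith [this.2]]
        · rw [hup e' h]
          have := abs_le.mp (hbd e')
          rw [abs_le]
          constructor <;> [linarith [this.1]; linarith [this.2]]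
    · -- backward edge e : w → b, 0 < x e
      set ρ := x e with hρ
      have hρpos : 0 < ρ := hpos
      have hbr : b ≠ r := fun h => hr e (hhe.trans h)
      refine ⟨min ε (ρ / (2 * (K + 1))), lt_min hε (by positivity), K + 1,
        by linarith, fun δ hδ hδε => ?_⟩
      obtain ⟨y, hy0, hyf, hyv, hcons, hvalr, hexc, hbd⟩ :=
        hP δ hδ (le_trans hδε (min_le_left _ _))
      have hδρ : (K + 1) * δ ≤ ρ / 2 := by
        have h1 : δ ≤ ρ / (2 * (K + 1)) := le_trans hδε (min_le_right _ _)
        calc (K + 1) * δ ≤ (K + 1) * (ρ / (2 * (K + 1))) := by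
              exact mul_le_mul_of_nonneg_left h1 (le_of_lt hK1)
          _ = ρ / 2 := by field_simp
      set y' := Function.update y e (y e - δ) with hy'
      have hup : ∀ e', e' ≠ e → y' e' = y e' := fun e' h =>
        Function.update_of_ne h _ _
      have hupe : y' e = y e - δ := Function.update_self _ _ _
      have hbde : |y e - x e| ≤ K * δ := hbd e
      have habs := abs_le.mp hbde
      have hin : ∀ t, D.inflow y' t = D.inflow y t +
          (if D.head e = t then -δ else 0) := by
        intro t
        rw [D.inflow_diff y y' e hup t, hupe]
        congr 1; split <;> ring
      have hout : ∀ t, D.outflow y' t = D.outflow y t +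
          (if D.tail e = t then -δ else 0) := by
        intro t
        rw [D.outflow_diff y y' e hup t, hupe]
        congr 1; split <;> ring
      have hwv : w ≠ v := by
        intro h
        have := D.outflow_zero_edge x v hx.1 hx.2.2.2 e (hte.trans h)
        rw [← hρ] at this; linarith
      refine ⟨y', ?_, ?_, ?_, ?_, ?_, ?_, ?_⟩
      · intro e'
        by_cases h : e' = e
        · subst h; rw [hupe]
          linarith [habs.1]
        · rw [hup e' h]; exact hy0 e'
      · intro e'
        by_cases h : e' = e
        · subst h; rw [hupe]; have := hyf e'; linarith
        · rw [hup e' h]; exact hyf e'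
      · intro e' hv'
        by_cases h : e' = e
        · exact absurd (h ▸ hv' : D.tail e = v) (hte ▸ (fun hh => hwv hh) :
            D.tail e ≠ v)
        · rw [hup e' h]; exact hyv e' hv'
      · intro t htr htw
        rw [hin t, hout t]
        have ht : D.tail e ≠ t := fun h => htw (hte ▸ h.symm ▸ rfl)
        by_cases hht : D.head e = t
        · have hbt' : b = t := hhe ▸ hht
          have h2 := hexc (hbt' ▸ htr)
          simp only [if_pos hht, if_neg ht]
          rw [← hbt'] at *
          linarith [h2]
        · simp only [if_neg hht, if_neg ht]
          have hbt' : t ≠ b := fun h => hht (h ▸ hhe)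
          have := hcons t htr hbt'
          linarith [this]
      · rw [hout r]
        rw [hvalr, if_neg hbr]
        by_cases hwr : w = r
        · rw [if_pos (hte.trans hwr), if_pos hwr]; ring
        · rw [if_neg (fun h => hwr (hte.symm.trans h)), if_neg hwr]; ring
      · intro hwr'
        rw [hin w, hout w, if_pos hte]
        by_cases hbw : b = w
        · rw [if_pos (hhe.trans hbw)]
          have := hexc hbr
          rw [hbw] at this
          linarith [this]
        · rw [if_neg (fun h => hbw (hhe.symm.trans h))]
          have := hcons w hwr' (fun h => hbw h.symm)
          linarith [this]
      · intro e'
        by_cases h : e' = e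
        · subst h
          rw [hupe]
          have := abs_le.mp (hbd e')
          rw [abs_le]
          constructor <;> [linarith [this.1]; linarith [this.2]]
        · rw [hup e' h]
          have := abs_le.mp (hbd e')
          rw [abs_le]
          constructor <;> [linarith [this.1]; linarith [this.2]]


lemma inflow_r_zero (hr : ∀ e, D.head e ≠ r) (x : E → ℝ) : D.inflow x r = 0 := by
  unfold inflow
  exact Finset.sum_eq_zero fun e _ => if_neg (hr e)

theorem mfmc (hr : ∀ e, D.head e ≠ r) {v : V} (hv : v ≠ r) (f : E → ℝ)
    (hf : ∀ e, 0 ≤ f e) : D.lamF r v f = D.cutMin r f v := by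
  obtain ⟨x, hx, hxf, hlam, hmax⟩ := D.exists_maxflow r v f hf
  apply le_antisymm
  · rw [hlam]
    exact D.le_cutMin r f hv _ fun X hvX hrX =>
      D.flow_le_cut r v x f hx hxf ↑X hvX (by exact_mod_cast hrX)
  · -- strong duality via residual reachability
    set reach : Set V := {u | Relation.ReflTransGen (D.rstep f x v) r u} with hreach
    have hvr : v ∉ reach := by
      intro hvin
      obtain ⟨ε, hε, K, hK, hP⟩ := D.augment r hr v f x hx hxf v hvin
      obtain ⟨y, hy0, hyf, hyv, hcons, hvalr, hexc, hbd⟩ := hP ε hε le_rfl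
      have hflow : D.IsFlow r v y := by
        refine ⟨hy0, fun t htr htv => ?_, D.inflow_r_zero r hr y, ?_⟩
        · have := hcons t htr htv
          have hxcons := hx.2.1 t htr htv
          linarith
        · have : D.outflow y v = D.outflow x v := by
            unfold outflow
            exact Finset.sum_congr rfl fun e _ => by
              by_cases h : D.tail e = v <;> simp [h, hyv e]
          rw [this, hx.2.2.2]
      have h1 := hmax y hflow (fun e => hyf e)
      rw [hvalr, if_neg hv] at h1
      linarith
    set W : Set V := reachᶜ with hW
    have hvW : v ∈ W := hvr
    have hrW : r ∉ W := fun h => h Relation.ReflTransGen.refl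
    have hsat : ∀ e, D.head e ∈ W → D.tail e ∉ W → x e = f e := by
      intro e hh ht
      by_contra hne
      have hlt : x e < f e := lt_of_le_of_ne (hxf e) hne
      have htr : D.tail e ∈ reach := not_not.mp ht
      have htv : D.tail e ≠ v := fun h => hvr (h ▸ htr)
      exact hh (Relation.ReflTransGen.tail htr ⟨htv, e, Or.inl ⟨rfl, rfl, hlt⟩⟩)
    have hzero : ∀ e, D.head e ∉ W → D.tail e ∈ W → x e = 0 := by
      intro e hh ht
      by_contra hne
      have hpos : 0 < x e := lt_of_le_of_ne (hx.1 e) (Ne.symm hne)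
      have hhr : D.head e ∈ reach := not_not.mp hh
      have hhv : D.head e ≠ v := fun h => hvr (h ▸ hhr)
      exact ht (Relation.ReflTransGen.tail hhr ⟨hhv, e, Or.inr ⟨rfl, rfl, hpos⟩⟩)
    have hval : D.outflow x r = D.rhoSet f W := by
      rw [D.flow_value_eq r v x hx W hvW hrW]
      have h1 : D.rhoSet x W = D.rhoSet f W := by
        unfold rhoSet
        refine Finset.sum_congr rfl fun e _ => ?_
        by_cases h : D.head e ∈ W ∧ D.tail e ∉ W
        · rw [if_pos h, if_pos h, hsat e h.1 h.2]
        · rw [if_neg h, if_neg h]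
      have h2 : D.rhoSet x Wᶜ = 0 := by
        unfold rhoSet
        refine Finset.sum_eq_zero fun e _ => ?_
        by_cases h : D.head e ∈ Wᶜ ∧ D.tail e ∉ Wᶜ
        · rw [if_pos h]
          exact hzero e h.1 (not_not.mp h.2)
        · rw [if_neg h]
      rw [h1, h2]; ring
    set X : Finset V := Finset.univ.filter (fun u => u ∈ W) with hX
    have hXW : (↑X : Set V) = W := by
      ext u; simp [hX]
    have := D.cutMin_le r f (v := v) X (by simp [hX, hvW]) (by simp [hX, hrW])
    rw [hXW] at this
    rw [hlam, hval]
    exact this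


lemma rho_submodular (f : E → ℝ) (hf : ∀ e, 0 ≤ f e) (A B : Set V) :
    D.rhoSet f (A ∪ B) + D.rhoSet f (A ∩ B) ≤ D.rhoSet f A + D.rhoSet f B := by
  unfold rhoSet
  rw [← Finset.sum_add_distrib, ← Finset.sum_add_distrib]
  refine Finset.sum_le_sum fun e _ => ?_
  have := hf e
  by_cases ha : D.head e ∈ A <;> by_cases hb : D.head e ∈ B <;>
    by_cases ta : D.tail e ∈ A <;> by_cases tb : D.tail e ∈ B <;>
    simp [Set.mem_union, Set.mem_inter_iff, ha, hb, ta, tb] <;> linarith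

lemma rho_diff (g f : E → ℝ) (e : E) (h : ∀ e', e' ≠ e → g e' = f e') (W : Set V) :
    D.rhoSet g W = D.rhoSet f W +
      (if D.head e ∈ W ∧ D.tail e ∉ W then g e - f e else 0) := by
  have key : ∑ e', ((if D.head e' ∈ W ∧ D.tail e' ∉ W then g e' else 0) -
      (if D.head e' ∈ W ∧ D.tail e' ∉ W then f e' else 0)) =
      (if D.head e ∈ W ∧ D.tail e ∉ W then g e - f e else 0) := by
    rw [Finset.sum_eq_single e]
    · split <;> simp
    · intro e' _ hne
      rw [h e' hne]; ring
    · simp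
  unfold rhoSet
  rw [Finset.sum_sub_distrib] at key
  linarith [key]

/-- Uncrossing: the intersection of a minimum cut for `v` with any tight set
containing `v` is again a minimum cut for `v`. -/
lemma mincut_inter (f : E → ℝ) (hf : ∀ e, 0 ≤ f e) {v : V}
    (X T : Finset V) (hvX : v ∈ X) (hrX : r ∉ X)
    (hmin : D.rhoSet f ↑X = D.cutMin r f v) (hvT : v ∈ T) (hrT : r ∉ T)
    (z : V) (hzT : z ∈ T) (htight : D.rhoSet f ↑T = D.cutMin r f z) :
    D.rhoSet f ↑(X ∩ T) = D.cutMin r f v := by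
  have h1 : D.cutMin r f v ≤ D.rhoSet f ↑(X ∩ T) :=
    D.cutMin_le r f (X ∩ T) (Finset.mem_inter.mpr ⟨hvX, hvT⟩)
      (fun h => hrX (Finset.mem_inter.mp h).1)
  have h2 : D.cutMin r f z ≤ D.rhoSet f ↑(X ∪ T) :=
    D.cutMin_le r f (X ∪ T) (Finset.mem_union.mpr (Or.inr hzT))
      (fun h => (Finset.mem_union.mp h).elim hrX hrT)
  have h3 := D.rho_submodular f hf ↑X ↑T
  rw [← Finset.coe_union, ← Finset.coe_inter] at h3
  linarith


/-- A tight set: an `r`-avoiding cut whose capacity equals the connectivity of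
one of its members. -/
def TightCut (f : E → ℝ) (X : Finset V) : Prop :=
  ∃ z ∈ X, D.rhoSet f ↑X = D.cutMin r f z

lemma inter_tights_mincut (f : E → ℝ) (hf : ∀ e, 0 ≤ f e) {v : V}
    (X₀ : Finset V) (hvX : v ∈ X₀) (hrX : r ∉ X₀)
    (hmin : D.rhoSet f ↑X₀ = D.cutMin r f v)
    (S : Finset (Finset V)) (hS : ∀ T ∈ S, v ∈ T ∧ r ∉ T ∧ D.TightCut r f T) :
    v ∈ X₀ ⊓ S.inf id ∧ r ∉ X₀ ⊓ S.inf id ∧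
      D.rhoSet f ↑(X₀ ⊓ S.inf id) = D.cutMin r f v := by
  induction S using Finset.induction_on with
  | empty => simpa using ⟨hvX, hrX, hmin⟩
  | @insert T S hTS ih =>
    have hT := hS T (Finset.mem_insert_self T S)
    obtain ⟨z, hzT, hzt⟩ := hT.2.2
    obtain ⟨ih1, ih2, ih3⟩ := ih (fun T' hT' => hS T' (Finset.mem_insert_of_mem hT'))
    have heq : X₀ ⊓ (insert T S).inf id = (X₀ ⊓ S.inf id) ⊓ T := by
      rw [Finset.inf_insert]
      simp only [id]
      rw [inf_comm T (S.inf id), ← inf_assoc]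
    rw [heq]
    refine ⟨Finset.mem_inter.mpr ⟨ih1, hT.1⟩,
      fun h => ih2 (Finset.mem_inter.mp h).1, ?_⟩
    exact D.mincut_inter r f hf (X₀ ⊓ S.inf id) T ih1 ih2 ih3 hT.1 hT.2.1 z hzT hzt

lemma exists_good_edge (f : E → ℝ) (hf : ∀ e, 0 ≤ f e) {v : V} (hv : v ≠ r)
    (hbig : D.cutMin r f v < D.inflow f v) :
    ∃ e, D.head e = v ∧ 0 < f e ∧
      ∀ X : Finset V, v ∈ X → r ∉ X → D.TightCut r f X → D.tail e ∈ X := by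
  by_contra hcon
  push_neg at hcon
  -- every positive in-edge of v enters some tight cut containing v
  have hbad : ∀ e, D.head e = v → 0 < f e →
      ∃ X : Finset V, (v ∈ X ∧ r ∉ X ∧ D.TightCut r f X) ∧ D.tail e ∉ X := by
    intro e he hfe
    obtain ⟨X, h1, h2, h3, h4⟩ := hcon e he hfe
    exact ⟨X, ⟨h1, h2, h3⟩, h4⟩
  obtain ⟨X₀, hvX, hrX, hmin⟩ := D.exists_mincut r f (v := v) hv
  set S : Finset (Finset V) := Finset.univ.filter
    (fun X => v ∈ X ∧ r ∉ X ∧ D.TightCut r f X) with hSdef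
  obtain ⟨hA1, hA2, hA3⟩ := D.inter_tights_mincut r f hf X₀ hvX hrX hmin S
    (fun T hT => by simpa [hSdef] using (Finset.mem_filter.mp hT).2)
  set A := X₀ ⊓ S.inf id with hAdef
  have hsub : D.inflow f v ≤ D.rhoSet f ↑A := by
    unfold inflow rhoSet
    refine Finset.sum_le_sum fun e _ => ?_
    by_cases he : D.head e = v
    · by_cases hfe : 0 < f e
      · obtain ⟨X, hXmem, htail⟩ := hbad e he hfe
        have hXS : X ∈ S := Finset.mem_filter.mpr ⟨Finset.mem_univ X, hXmem⟩
        have hAX : A ≤ X := le_trans inf_le_right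
          (le_trans (Finset.inf_le hXS) le_rfl)
        have h1 : D.head e ∈ A := he ▸ hA1
        have h2 : D.tail e ∉ A := fun h => htail (hAX h)
        rw [if_pos he, if_pos ⟨Finset.mem_coe.mpr h1, fun h =>
          h2 (Finset.mem_coe.mp h)⟩]
      · push_neg at hfe
        have : f e = 0 := le_antisymm hfe (hf e)
        rw [if_pos he, this]
        split <;> simp
    · rw [if_neg he]
      split <;> first | exact hf e | exact le_rfl
  rw [hA3] at hsub
  linarith


noncomputable def maxOver (f : E → ℝ) (X : Finset V) : ℝ :=
  sSup ↑(X.image (fun z => D.cutMin r f z))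

lemma le_maxOver (f : E → ℝ) {X : Finset V} {z : V} (hz : z ∈ X) :
    D.cutMin r f z ≤ D.maxOver r f X :=
  le_csSup (Set.Finite.bddAbove (Finset.finite_toSet _))
    (Finset.mem_coe.mpr (Finset.mem_image_of_mem _ hz))

lemma maxOver_mem (f : E → ℝ) {X : Finset V} (hX : X.Nonempty) :
    ∃ z ∈ X, D.maxOver r f X = D.cutMin r f z := by
  have h : D.maxOver r f X ∈ (↑(X.image (fun z => D.cutMin r f z)) : Set ℝ) :=
    Set.Nonempty.csSup_mem (by exact_mod_cast hX.image _) (Finset.finite_toSet _)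
  obtain ⟨z, hz, hval⟩ := Finset.mem_image.mp (Finset.mem_coe.mp h)
  exact ⟨z, hz, hval.symm⟩

lemma rho_le_of_mem (f : E → ℝ) {X : Finset V} {z : V} (hz : z ∈ X) (hrX : r ∉ X) :
    D.cutMin r f z ≤ D.rhoSet f ↑X := D.cutMin_le r f X hz hrX

/-- Reduction lemma: given a good edge into `v`, reduce its capacity while
preserving all connectivities. -/
lemma reduce_edge (f : E → ℝ) (hf : ∀ e, 0 ≤ f e) {v : V} (hv : v ≠ r)
    (e : E) (hev : D.head e = v) (hfe : 0 < f e)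
    (hgood : ∀ X : Finset V, v ∈ X → r ∉ X → D.TightCut r f X → D.tail e ∈ X) :
    ∃ f' : E → ℝ, ∃ ε : ℝ, 0 < ε ∧ (∀ e', 0 ≤ f' e') ∧ f' ≤ f ∧
      (∀ u, u ≠ r → D.cutMin r f' u = D.cutMin r f u) ∧
      D.inflow f' v = D.inflow f v - ε ∧
      (∑ e', f' e') = (∑ e', f e') - ε ∧
      ((∀ e', ∃ n : ℤ, f e' = n) →
        (∃ n : ℤ, ε = n) ∧ ∀ e', ∃ n : ℤ, f' e' = n) := by
  classical
  set Bad : Finset (Finset V) := Finset.univ.filter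
    (fun X => v ∈ X ∧ r ∉ X ∧ D.tail e ∉ X) with hBad
  set vals : Finset ℝ := insert (f e)
    (Bad.image (fun X : Finset V => D.rhoSet f (↑X : Set V) - D.maxOver r f X)) with hvals
  have hvalsne : vals.Nonempty := ⟨f e, Finset.mem_insert_self _ _⟩
  set ε := vals.min' hvalsne with hε
  have hslack : ∀ X ∈ Bad, 0 < D.rhoSet f ↑X - D.maxOver r f X := by
    intro X hX
    obtain ⟨h1, h2, h3⟩ := (Finset.mem_filter.mp hX).2
    obtain ⟨z, hz, hzeq⟩ := D.maxOver_mem r f ⟨v, h1⟩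
    have hle : D.cutMin r f z ≤ D.rhoSet f ↑X := D.rho_le_of_mem r f hz h2
    rcases lt_or_eq_of_le hle with h | h
    · rw [hzeq]; linarith
    · exact absurd (hgood X h1 h2 ⟨z, hz, h.symm⟩) h3
  have hεpos : 0 < ε := by
    rw [hε]
    apply (Finset.lt_min'_iff _ _).mpr
    intro b hb
    rcases Finset.mem_insert.mp hb with h | h
    · exact h ▸ hfe
    · obtain ⟨X, hX, rfl⟩ := Finset.mem_image.mp h
      exact hslack X hX
  have hεfe : ε ≤ f e := Finset.min'_le _ _ (Finset.mem_insert_self _ _)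
  set f' := Function.update f e (f e - ε) with hf'
  have hup : ∀ e', e' ≠ e → f' e' = f e' := fun e' h =>
    Function.update_of_ne h _ _
  have hupe : f' e = f e - ε := Function.update_self _ _ _
  have hf'0 : ∀ e', 0 ≤ f' e' := by
    intro e'
    by_cases h : e' = e
    · subst h; rw [hupe]; linarith
    · rw [hup e' h]; exact hf e'
  have hf'f : f' ≤ f := by
    intro e'
    by_cases h : e' = e
    · subst h; rw [hupe]; linarith
    · rw [hup e' h]
  have hcut : ∀ u, u ≠ r → D.cutMin r f' u = D.cutMin r f u := by
    intro u hu
    apply le_antisymm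
    · obtain ⟨X, h1, h2, h3⟩ := D.exists_mincut r f (v := u) hu
      calc D.cutMin r f' u ≤ D.rhoSet f' ↑X := D.cutMin_le r f' X h1 h2
        _ ≤ D.rhoSet f ↑X := D.rho_mono f' f hf'0 hf'f _
        _ = D.cutMin r f u := h3
    · apply D.le_cutMin r f' hu
      intro X h1 h2
      rw [D.rho_diff f' f e hup ↑X]
      by_cases henter : D.head e ∈ (↑X : Set V) ∧ D.tail e ∉ (↑X : Set V)
      · have hXBad : X ∈ Bad := Finset.mem_filter.mpr ⟨Finset.mem_univ X,
          hev ▸ Finset.mem_coe.mp henter.1, h2,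
          fun h => henter.2 (Finset.mem_coe.mpr h)⟩
        have hεle : ε ≤ D.rhoSet f ↑X - D.maxOver r f X :=
          Finset.min'_le _ _ (Finset.mem_insert_of_mem
            (Finset.mem_image_of_mem _ hXBad))
        have hmo : D.cutMin r f u ≤ D.maxOver r f X := D.le_maxOver r f h1
        rw [if_pos henter, hupe]
        linarith
      · rw [if_neg henter]
        have := D.cutMin_le r f X h1 h2
        linarith
  have hinf : D.inflow f' v = D.inflow f v - ε := by
    rw [D.inflow_diff f f' e hup v, hupe, if_pos hev]
    ring
  have hsum : (∑ e', f' e') = (∑ e', f e') - ε := by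
    have key : ∑ e', (f' e' - f e') = -ε := by
      rw [Finset.sum_eq_single e]
      · rw [hupe]; ring
      · intro e' _ hne; rw [hup e' hne]; ring
      · simp
    rw [Finset.sum_sub_distrib] at key
    linarith
  have hrho_int : (∀ e', ∃ n : ℤ, f e' = n) → ∀ X : Finset V,
      ∃ n : ℤ, D.rhoSet f ↑X = n := by
    intro hint X
    unfold rhoSet
    induction (Finset.univ : Finset E) using Finset.induction_on with
    | empty => exact ⟨0, by simp⟩
    | @insert a s ha ih =>
      obtain ⟨n, hn⟩ := ih
      obtain ⟨m, hm⟩ := hint a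
      rw [Finset.sum_insert ha]
      by_cases h : D.head a ∈ (↑X : Set V) ∧ D.tail a ∉ (↑X : Set V)
      · exact ⟨m + n, by rw [if_pos h, hn, hm]; push_cast; ring⟩
      · exact ⟨n, by rw [if_neg h, hn]; ring⟩
  have hint : (∀ e', ∃ n : ℤ, f e' = n) → ∃ n : ℤ, ε = n := by
    intro hintf
    have hcut_int : ∀ z, z ≠ r → ∃ n : ℤ, D.cutMin r f z = n := by
      intro z hz
      obtain ⟨X, h1, h2, h3⟩ := D.exists_mincut r f (v := z) hz
      rw [← h3]; exact hrho_int hintf X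
    have hmem := Finset.min'_mem vals hvalsne
    rw [← hε] at hmem
    rcases Finset.mem_insert.mp hmem with h | h
    · obtain ⟨n, hn⟩ := hintf e
      exact ⟨n, h ▸ hn⟩
    · obtain ⟨X, hX, hXeq⟩ := Finset.mem_image.mp h
      obtain ⟨h1, h2, h3⟩ := (Finset.mem_filter.mp hX).2
      obtain ⟨z, hz, hzeq⟩ := D.maxOver_mem r f ⟨v, h1⟩
      have hzr : z ≠ r := fun hzr => h2 (hzr ▸ hz)
      obtain ⟨n, hn⟩ := hrho_int hintf X
      obtain ⟨m, hm⟩ := hcut_int z hzr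
      exact ⟨n - m, by rw [← hXeq, hzeq, hn, hm]; push_cast; ring⟩
  refine ⟨f', ε, hεpos, hf'0, hf'f, hcut, hinf, hsum, fun hintf => ⟨hint hintf, ?_⟩⟩
  intro e'
  by_cases h : e' = e
  · subst h
    obtain ⟨n, hn⟩ := hintf e'
    obtain ⟨m, hm⟩ := hint hintf
    exact ⟨n - m, by rw [hupe, hn, hm]; push_cast; ring⟩
  · rw [hup e' h]; exact hintf e'


lemma cutMin_nonneg (f : E → ℝ) (hf : ∀ e, 0 ≤ f e) {v : V} (hv : v ≠ r) :
    0 ≤ D.cutMin r f v :=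
  D.le_cutMin r f hv 0 fun X _ _ => D.rho_nonneg f hf _

lemma cutMin_le_inflow (f : E → ℝ) (hf : ∀ e, 0 ≤ f e) {v : V} (hv : v ≠ r) :
    D.cutMin r f v ≤ D.inflow f v := by
  have h1 : D.cutMin r f v ≤ D.rhoSet f ↑({v} : Finset V) :=
    D.cutMin_le r f {v} (Finset.mem_singleton_self v)
      (fun h => hv (Finset.mem_singleton.mp h).symm)
  refine le_trans h1 ?_
  unfold rhoSet inflow
  refine Finset.sum_le_sum fun e _ => ?_
  by_cases h : D.head e = v
  · rw [if_pos h]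
    split <;> first | exact le_rfl | exact hf e
  · rw [if_neg (fun hc : D.head e ∈ (↑({v}:Finset V) : Set V) ∧ _ =>
      h (by simpa using hc.1)), if_neg h]

lemma inflow_le_sum (f : E → ℝ) (hf : ∀ e, 0 ≤ f e) (v : V) :
    D.inflow f v ≤ ∑ e, f e := by
  unfold inflow
  refine Finset.sum_le_sum fun e _ => ?_
  split <;> first | exact le_rfl | exact hf e

lemma cutMin_mono (f g : E → ℝ) (hf : ∀ e, 0 ≤ f e) (hfg : f ≤ g) {v : V}
    (hv : v ≠ r) : D.cutMin r f v ≤ D.cutMin r g v := by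
  apply D.le_cutMin r g hv
  intro X h1 h2
  exact le_trans (D.cutMin_le r f X h1 h2) (D.rho_mono f g hf hfg _)

/-- Integral version of the reduction process. -/
lemma integral_reduce (N : ℕ) : ∀ f : E → ℝ, (∀ e, 0 ≤ f e) →
    (∀ e, ∃ n : ℤ, f e = n) → (∑ e, f e) ≤ N →
    ∃ f' : E → ℝ, (∀ e, 0 ≤ f' e) ∧ f' ≤ f ∧ (∀ e, ∃ n : ℤ, f' e = n) ∧
      (∀ u, u ≠ r → D.cutMin r f' u = D.cutMin r f u) ∧
      (∀ v, v ≠ r → D.inflow f' v = D.cutMin r f' v) := by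
  induction N with
  | zero =>
    intro f hf hint hsum
    refine ⟨f, hf, le_rfl, hint, fun u _ => rfl, fun v hv => ?_⟩
    have h1 := D.cutMin_le_inflow r f hf hv
    have h2 := D.inflow_le_sum f hf v
    have h3 := D.cutMin_nonneg r f hf hv
    have : D.inflow f v ≤ 0 := le_trans h2 (by exact_mod_cast hsum)
    linarith
  | succ N ih =>
    intro f hf hint hsum
    by_cases hall : ∀ v, v ≠ r → D.inflow f v = D.cutMin r f v
    · exact ⟨f, hf, le_rfl, hint, fun u _ => rfl, hall⟩
    · push_neg at hall
      obtain ⟨v, hv, hne⟩ := hall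
      have hbig : D.cutMin r f v < D.inflow f v :=
        lt_of_le_of_ne (D.cutMin_le_inflow r f hf hv) (Ne.symm hne)
      obtain ⟨e, hev, hfe, hgood⟩ := D.exists_good_edge r f hf hv hbig
      obtain ⟨f₁, ε, hεpos, hf₁0, hf₁f, hcut, hinf, hsum₁, hintf⟩ :=
        D.reduce_edge r f hf hv e hev hfe hgood
      obtain ⟨⟨n, hn⟩, hint₁⟩ := hintf hint
      have hε1 : (1:ℝ) ≤ ε := by
        have h0 : (0:ℝ) < (n:ℝ) := hn ▸ hεpos
        have h0' : (0:ℤ) < n := by exact_mod_cast h0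
        have h1' : (1:ℤ) ≤ n := h0'
        rw [hn]
        exact_mod_cast h1'
      have hsum₁' : (∑ e', f₁ e') ≤ N := by
        rw [hsum₁]
        have hs : (∑ e', f e') ≤ (N:ℝ) + 1 := by exact_mod_cast hsum
        linarith
      obtain ⟨f₂, h1, h2, h3, h4, h5⟩ := ih f₁ hf₁0 hint₁ hsum₁'
      exact ⟨f₂, h1, le_trans h2 hf₁f, h3,
        fun u hu => (h4 u hu).trans (hcut u hu), h5⟩

/-- Fractional version via compactness minimization. -/
lemma frac_reduce (c : E → ℝ) (hc : ∀ e, 0 ≤ c e) :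
    ∃ f : E → ℝ, (∀ e, 0 ≤ f e) ∧ f ≤ c ∧
      (∀ u, u ≠ r → D.cutMin r f u = D.cutMin r c u) ∧
      (∀ v, v ≠ r → D.inflow f v = D.cutMin r f v) := by
  classical
  set P : Set (E → ℝ) := Set.Icc (fun _ => 0) c ∩
    ⋂ (u : V) (_ : u ≠ r) (X : Finset V) (_ : u ∈ X) (_ : r ∉ X),
      {f : E → ℝ | D.cutMin r c u ≤ D.rhoSet f ↑X} with hP
  have hmemP : ∀ f : E → ℝ, f ∈ P ↔ ((∀ e, 0 ≤ f e) ∧ f ≤ c ∧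
      ∀ u, u ≠ r → ∀ X : Finset V, u ∈ X → r ∉ X →
        D.cutMin r c u ≤ D.rhoSet f ↑X) := by
    intro f
    simp only [hP, Set.mem_inter_iff, Set.mem_Icc, Set.mem_iInter,
      Set.mem_setOf_eq]
    constructor
    · rintro ⟨⟨h1, h2⟩, h3⟩
      exact ⟨fun e => h1 e, h2, fun u hu X hX hrX => h3 u hu X hX hrX⟩
    · rintro ⟨h1, h2, h3⟩
      exact ⟨⟨fun e => h1 e, h2⟩, fun u hu X hX hrX => h3 u hu X hX hrX⟩
  have hclosed : IsClosed P := by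
    apply IsClosed.inter isClosed_Icc
    refine isClosed_iInter fun u => isClosed_iInter fun hu =>
      isClosed_iInter fun X => isClosed_iInter fun hX =>
      isClosed_iInter fun hrX => ?_
    exact isClosed_le continuous_const (D.continuous_rho ↑X)
  have hcompact : IsCompact P :=
    IsCompact.of_isClosed_subset isCompact_Icc hclosed Set.inter_subset_left
  have hne : P.Nonempty := by
    refine ⟨c, (hmemP c).mpr ⟨hc, le_rfl, fun u hu X hX hrX => ?_⟩⟩
    exact D.cutMin_le r c X hX hrX
  have hcont : ContinuousOn (fun f : E → ℝ => ∑ e, f e) P :=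
    (continuous_finset_sum _ fun e _ => continuous_apply e).continuousOn
  obtain ⟨f, hfP, hfmin'⟩ := hcompact.exists_isMinOn hne hcont
  have hfmin : ∀ g ∈ P, (∑ e, f e) ≤ ∑ e, g e := fun g hg => hfmin' hg
  obtain ⟨hf0, hfc, hfcut⟩ := (hmemP f).mp hfP
  have hcutf : ∀ u, u ≠ r → D.cutMin r f u = D.cutMin r c u := by
    intro u hu
    apply le_antisymm (D.cutMin_mono r f c hf0 hfc hu)
    exact D.le_cutMin r f hu _ (fun X h1 h2 => hfcut u hu X h1 h2)
  refine ⟨f, hf0, hfc, hcutf, fun v hv => ?_⟩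
  by_contra hne'
  have hbig : D.cutMin r f v < D.inflow f v :=
    lt_of_le_of_ne (D.cutMin_le_inflow r f hf0 hv) (Ne.symm hne')
  obtain ⟨e, hev, hfe, hgood⟩ := D.exists_good_edge r f hf0 hv hbig
  obtain ⟨f₁, ε, hεpos, hf₁0, hf₁f, hcut, hinf, hsum₁, -⟩ :=
    D.reduce_edge r f hf0 hv e hev hfe hgood
  have hf₁P : f₁ ∈ P := by
    refine (hmemP f₁).mpr ⟨hf₁0, le_trans hf₁f hfc, fun u hu X h1 h2 => ?_⟩
    calc D.cutMin r c u = D.cutMin r f u := (hcutf u hu).symm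
      _ = D.cutMin r f₁ u := (hcut u hu).symm
      _ ≤ D.rhoSet f₁ ↑X := D.cutMin_le r f₁ X h1 h2
  have := hfmin f₁ hf₁P
  rw [hsum₁] at this
  linarith


end Aux

end Digraph'

open Digraph' in
/-- Fractional Lovász theorem: there is `f ≤ c` with
`λ_c(v) = λ_f(v) = ϱ_f(v)` for all `v ≠ r`; if `c` is integral then `f` can be
chosen integral. -/
theorem stmt8 {V E : Type} [Fintype V] [Fintype E] (D : Digraph' V E)
    (hsimple : D.NoParallel) (r : V) (hr : ∀ e, D.head e ≠ r)
    (c : E → ℝ) (hc : ∀ e, 0 ≤ c e) :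
    (∃ f : E → ℝ, (∀ e, 0 ≤ f e) ∧ f ≤ c ∧ ∀ v, v ≠ r →
        D.lamF r v c = D.lamF r v f ∧ D.lamF r v f = D.inflow f v) ∧
    ((∀ e, ∃ n : ℤ, c e = n) →
      ∃ f : E → ℝ, (∀ e, 0 ≤ f e) ∧ f ≤ c ∧ (∀ e, ∃ n : ℤ, f e = n) ∧
        ∀ v, v ≠ r →
          D.lamF r v c = D.lamF r v f ∧ D.lamF r v f = D.inflow f v) := by
  constructor
  · obtain ⟨f, h0, hfc, hcut, hinfl⟩ := D.frac_reduce r c hc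
    refine ⟨f, h0, hfc, fun v hv => ?_⟩
    have h1 := D.mfmc r hr hv c hc
    have h2 := D.mfmc r hr hv f h0
    exact ⟨by rw [h1, h2, hcut v hv], by rw [h2, hinfl v hv]⟩
  · intro hcint
    obtain ⟨f, h0, hfc, hint, hcut, hinfl⟩ := D.integral_reduce r
      (Nat.ceil (∑ e, c e)) c hc hcint (Nat.le_ceil _)
    refine ⟨f, h0, hfc, hint, fun v hv => ?_⟩
    have h1 := D.mfmc r hr hv c hc
    have h2 := D.mfmc r hr hv f h0
    exact ⟨by rw [h1, h2, hcut v hv], by rw [h2, hinfl v hv]⟩
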